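/- arXiv:1804.04260 — 2 statements merged into one kernel-verified Lean document; each statement's English description precedes it below -/
import Mathlib

section
/- Let Q = (V_Q, E_Q, λ_Q) be a pattern graph, G = (V, E, λ_G) a data graph, sim a family of candidate-match sets, u ∈ V_Q a pattern node, and v ∈ V a potential match of u. Let X = {u' : u' is a child of u and u has another child u'' ≠ u' with λ_Q(u'') = λ_Q(u')}. Then all LR constraints defined over the children of u are satisfied by the children of v (i.e., for every label l for which the set C_l of children of u labeled l has at least two elements, there exists an injective map f_l : C_l → V such that for every u' ∈ C_l, f_l(u') is a child of v and f_l(u') ∈ sim(u')) if and only if Hall's condition holds: for every subset W ⊆ X, the number of nodes v' of G that are children of v and satisfy v' ∈ sim(u') for some u' ∈ W is at least |W|. -/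
/-- A directed labeled graph: a finite set of nodes `V`, a finite set of
directed edges `E ⊆ V × V`, and a labeling function `lab`. Both data graphs
and pattern graphs are specified with this structure. -/
structure DGraph (α L : Type) where
  V : Finset α
  E : Finset (α × α)
  lab : α → L
  edge_mem : ∀ e ∈ E, e.1 ∈ V ∧ e.2 ∈ V

variable {α L : Type} [DecidableEq α] [DecidableEq L]

/-- The children of `u`: all nodes `u'` with an edge `(u, u')`. -/
def DGraph.children (G : DGraph α L) (u : α) : Finset α :=
  (G.E.filter (fun e => e.1 = u)).image Prod.snd

/-- The parents of `u`: all nodes `u'` with an edge `(u', u)`. -/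
def DGraph.parents (G : DGraph α L) (u : α) : Finset α :=
  (G.E.filter (fun e => e.2 = u)).image Prod.fst

/-- **Theorem (LR constraints over children ↔ Hall's condition).**
Let `Q` be a pattern graph, `G` a data graph, `sim` a family of candidate-match
sets, `u` a pattern node and `v ∈ V` a potential match of `u`, and let
`X = {u' child of u | ∃ child u'' ≠ u' of u with the same label}`. All LR
constraints defined over the children of `u` are satisfied by the children of
`v` iff for every subset `W ⊆ X`, the number of children of `v` that belong to
`sim u'` for some `u' ∈ W` is at least `|W|`. -/
theorem lr_children_satisfied_iff_hall
    (Q G : DGraph α L) (sim : α → Finset α)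
    (hsim : ∀ u' v', v' ∈ sim u' → v' ∈ G.V ∧ Q.lab u' = G.lab v')
    (u : α) (hu : u ∈ Q.V) (v : α) (hv : v ∈ G.V) (hpm : Q.lab u = G.lab v) :
    (∀ l : L, 2 ≤ ((Q.children u).filter (fun u' => Q.lab u' = l)).card →
        ∃ f : α → α,
          Set.InjOn f ↑((Q.children u).filter (fun u' => Q.lab u' = l)) ∧
          ∀ u' ∈ (Q.children u).filter (fun u' => Q.lab u' = l),
            f u' ∈ G.children v ∧ f u' ∈ sim u')
    ↔
    (∀ W ⊆ (Q.children u).filter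
        (fun u' => ∃ u'' ∈ Q.children u, u'' ≠ u' ∧ Q.lab u'' = Q.lab u'),
      W.card ≤ ((G.children v).filter (fun v' => ∃ u' ∈ W, v' ∈ sim u')).card) := by
  classical
  constructor
  · -- LR constraints → Hall
    intro h W hW
    choose f hfinj hfmem using h
    set Cl : L → Finset α := fun l => (Q.children u).filter (fun u' => Q.lab u' = l) with hCl
    -- every u' ∈ W lies in Cl (Q.lab u') with card ≥ 2
    have hmem : ∀ u' ∈ W, u' ∈ Cl (Q.lab u') ∧ 2 ≤ (Cl (Q.lab u')).card := by
      intro u' hu'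
      have := hW hu'
      simp only [Finset.mem_filter] at this
      obtain ⟨hc, u'', hc'', hne, hlab⟩ := this
      constructor
      · simp [hCl, hc]
      · have h1 : u' ∈ Cl (Q.lab u') := by simp [hCl, hc]
        have h2 : u'' ∈ Cl (Q.lab u') := by simp [hCl, hc'', hlab]
        calc 2 = ({u'', u'} : Finset α).card := by rw [Finset.card_insert_of_notMem (by simpa using hne)]; simp
        _ ≤ (Cl (Q.lab u')).card := Finset.card_le_card (by intro x hx; simp at hx; rcases hx with rfl | rfl <;> assumption)
    set F : α → α := fun u' =>
      if h : 2 ≤ (Cl (Q.lab u')).card then f (Q.lab u') h u' else u' with hF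
    have hFval : ∀ u' ∈ W, F u' ∈ G.children v ∧ F u' ∈ sim u' := by
      intro u' hu'
      obtain ⟨h1, h2⟩ := hmem u' hu'
      simp only [hF, dif_pos h2]
      exact hfmem (Q.lab u') h2 u' h1
    have hFlab : ∀ u' ∈ W, G.lab (F u') = Q.lab u' := by
      intro u' hu'
      exact ((hsim u' (F u') (hFval u' hu').2).2).symm
    have hinj : Set.InjOn F ↑W := by
      intro a ha b hb hab
      have hla : G.lab (F a) = Q.lab a := hFlab a ha
      have hlb : G.lab (F b) = Q.lab b := hFlab b hb
      have hlabeq : Q.lab a = Q.lab b := by rw [← hla, ← hlb, hab]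
      obtain ⟨ha1, ha2⟩ := hmem a ha
      obtain ⟨hb1, hb2⟩ := hmem b hb
      have hb1' : b ∈ Cl (Q.lab a) := by rw [hlabeq]; exact hb1
      have : F a = f (Q.lab a) ha2 a := by simp [hF, ha2]
      have hFb : F b = f (Q.lab a) ha2 b := by
        simp only [hF]
        rw [dif_pos hb2]
        congr 1 <;> rw [hlabeq]
      exact hfinj (Q.lab a) ha2 (by exact_mod_cast ha1) (by exact_mod_cast hb1') (by rw [← this, ← hFb, hab])
    calc W.card = (W.image F).card := (Finset.card_image_of_injOn hinj).symm
    _ ≤ _ := by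
        apply Finset.card_le_card
        intro x hx
        simp only [Finset.mem_image] at hx
        obtain ⟨a, ha, rfl⟩ := hx
        simp only [Finset.mem_filter]
        exact ⟨(hFval a ha).1, a, ha, (hFval a ha).2⟩
  · -- Hall → LR constraints
    intro h l hl
    set Cl : Finset α := (Q.children u).filter (fun u' => Q.lab u' = l) with hCl
    have hClX : Cl ⊆ (Q.children u).filter
        (fun u' => ∃ u'' ∈ Q.children u, u'' ≠ u' ∧ Q.lab u'' = Q.lab u') := by
      intro u' hu'
      simp only [hCl, Finset.mem_filter] at hu'
      obtain ⟨hc, hlab⟩ := hu'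
      obtain ⟨u'', hu'', hne⟩ := Finset.exists_mem_ne (by omega : 1 < Cl.card) u'
      simp only [hCl, Finset.mem_filter] at hu''
      exact Finset.mem_filter.2 ⟨hc, u'', hu''.1, hne, by rw [hu''.2, hlab]⟩
    set t : {x // x ∈ Cl} → Finset α := fun x => (G.children v).filter (fun v' => v' ∈ sim x.1) with ht
    have hall : ∀ s : Finset {x // x ∈ Cl}, s.card ≤ (s.biUnion t).card := by
      intro s
      have hsub : s.image Subtype.val ⊆ (Q.children u).filter
          (fun u' => ∃ u'' ∈ Q.children u, u'' ≠ u' ∧ Q.lab u'' = Q.lab u') := by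
        intro x hx
        simp only [Finset.mem_image] at hx
        obtain ⟨a, _, rfl⟩ := hx
        exact hClX a.2
      have := h (s.image Subtype.val) hsub
      rw [Finset.card_image_of_injective _ Subtype.val_injective] at this
      refine this.trans (Finset.card_le_card ?_)
      intro x hx
      simp only [Finset.mem_filter, Finset.mem_image] at hx
      obtain ⟨hxc, a, ⟨b, hb, rfl⟩, hxsim⟩ := hx
      exact Finset.mem_biUnion.2 ⟨b, hb, Finset.mem_filter.2 ⟨hxc, hxsim⟩⟩
    obtain ⟨g, hginj, hgmem⟩ := (Finset.all_card_le_biUnion_card_iff_existsInjective' t).1 hall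
    refine ⟨fun x => if h : x ∈ Cl then g ⟨x, h⟩ else x, ?_, ?_⟩
    · intro a ha b hb hab
      have ha' : a ∈ Cl := by simpa [hCl] using ha
      have hb' : b ∈ Cl := by simpa [hCl] using hb
      simp only [dif_pos ha', dif_pos hb'] at hab
      exact congrArg Subtype.val (hginj hab)
    · intro u' hu'
      have hu'' : u' ∈ Cl := hu'
      simp only [dif_pos hu'']
      exact Finset.mem_filter.1 (hgmem ⟨u', hu''⟩)
end

section
/- Let Q = (V_Q, E_Q, λ_Q) be a pattern graph and G = (V, E, λ_G) a data graph. Suppose Q has no LR constraint, i.e., for every node u ∈ V_Q the children of u have pairwise distinct labels and the parents of u have pairwise distinct labels. Then every dual simulation of Q in G is a triple simulation of Q in G; consequently, Q matches G via dual simulation if and only if Q matches G via triple simulation. -/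
variable {α L : Type} [DecidableEq α] [DecidableEq L]

/-- `S ⊆ V_Q × V` is a triple simulation of the pattern graph `Q` in the data
graph `G`: (1) matched nodes carry the same label; (2) every pattern node has a
match; (3) for every `(u,v) ∈ S` there is an injective map `f` from the children
of `u` in `Q` to the children of `v` in `G` with `(u', f u') ∈ S` for every child
`u'` of `u`; (4) symmetrically for parents. -/
def IsTripleSim (Q G : DGraph α L) (S : Set (α × α)) : Prop :=
  (∀ u v, (u, v) ∈ S → u ∈ Q.V ∧ v ∈ G.V ∧ Q.lab u = G.lab v) ∧
  (∀ u ∈ Q.V, ∃ v ∈ G.V, (u, v) ∈ S) ∧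
  (∀ u v, (u, v) ∈ S → ∃ f : α → α,
      Set.InjOn f ↑(Q.children u) ∧
      ∀ u' ∈ Q.children u, f u' ∈ G.children v ∧ (u', f u') ∈ S) ∧
  (∀ u v, (u, v) ∈ S → ∃ g : α → α,
      Set.InjOn g ↑(Q.parents u) ∧
      ∀ u' ∈ Q.parents u, g u' ∈ G.parents v ∧ (u', g u') ∈ S)

/-- `S ⊆ V_Q × V` is a dual simulation of the pattern graph `Q` in the data
graph `G`: labels agree, every pattern node has a match, and child and parent
relationships are preserved. -/
def IsDualSim (Q G : DGraph α L) (S : Set (α × α)) : Prop :=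
  (∀ u v, (u, v) ∈ S → u ∈ Q.V ∧ v ∈ G.V ∧ Q.lab u = G.lab v) ∧
  (∀ u ∈ Q.V, ∃ v ∈ G.V, (u, v) ∈ S) ∧
  (∀ u v, (u, v) ∈ S → ∀ u' ∈ Q.children u, ∃ v' ∈ G.children v, (u', v') ∈ S) ∧
  (∀ u v, (u, v) ∈ S → ∀ u' ∈ Q.parents u, ∃ v' ∈ G.parents v, (u', v') ∈ S)

/-- **Theorem (without LR constraints, dual and triple simulation coincide).**
Suppose the pattern graph `Q` has no LR constraint: for every node `u ∈ V_Q`,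
the children of `u` have pairwise distinct labels and the parents of `u` have
pairwise distinct labels. Then every dual simulation of `Q` in `G` is a triple
simulation of `Q` in `G`; consequently, `Q` matches `G` via dual simulation iff
`Q` matches `G` via triple simulation. -/
theorem dualSim_is_tripleSim_of_no_LR
    (Q G : DGraph α L)
    (hnoLR : ∀ u ∈ Q.V,
      (∀ u₁ ∈ Q.children u, ∀ u₂ ∈ Q.children u, Q.lab u₁ = Q.lab u₂ → u₁ = u₂) ∧
      (∀ u₁ ∈ Q.parents u, ∀ u₂ ∈ Q.parents u, Q.lab u₁ = Q.lab u₂ → u₁ = u₂)) :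
    (∀ S : Set (α × α), IsDualSim Q G S → IsTripleSim Q G S) ∧
    ((∃ S : Set (α × α), IsDualSim Q G S) ↔
      ∃ S : Set (α × α), IsTripleSim Q G S) := by
  
  have main : ∀ S : Set (α × α), IsDualSim Q G S → IsTripleSim Q G S := by
    intro S hS
    obtain ⟨hlab, hV, hch, hpa⟩ := hS
    refine ⟨hlab, hV, ?_, ?_⟩
    · intro u v huv
      have huQ : u ∈ Q.V := (hlab u v huv).1
      have hfex : ∀ u' ∈ Q.children u, ∃ v', v' ∈ G.children v ∧ (u', v') ∈ S := by
        intro u' hu'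
        obtain ⟨v', hv', hs⟩ := hch u v huv u' hu'
        exact ⟨v', hv', hs⟩
      classical
      choose f hf1 hf2 using fun u' (h : u' ∈ Q.children u) => hfex u' h
      refine ⟨fun u' => if h : u' ∈ Q.children u then f u' h else u', ?_, ?_⟩
      · intro u₁ h1 u₂ h2 heq
        simp only [Finset.mem_coe] at h1 h2
        simp only [dif_pos h1, dif_pos h2] at heq
        apply (hnoLR u huQ).1 u₁ h1 u₂ h2
        have e1 : Q.lab u₁ = G.lab (f u₁ h1) := (hlab _ _ (hf2 u₁ h1)).2.2
        have e2 : Q.lab u₂ = G.lab (f u₂ h2) := (hlab _ _ (hf2 u₂ h2)).2.2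
        rw [e1, e2, heq]
      · intro u' h
        simp only [dif_pos h]
        exact ⟨hf1 u' h, hf2 u' h⟩
    · intro u v huv
      have huQ : u ∈ Q.V := (hlab u v huv).1
      have hfex : ∀ u' ∈ Q.parents u, ∃ v', v' ∈ G.parents v ∧ (u', v') ∈ S := by
        intro u' hu'
        obtain ⟨v', hv', hs⟩ := hpa u v huv u' hu'
        exact ⟨v', hv', hs⟩
      classical
      choose f hf1 hf2 using fun u' (h : u' ∈ Q.parents u) => hfex u' h
      refine ⟨fun u' => if h : u' ∈ Q.parents u then f u' h else u', ?_, ?_⟩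
      · intro u₁ h1 u₂ h2 heq
        simp only [Finset.mem_coe] at h1 h2
        simp only [dif_pos h1, dif_pos h2] at heq
        apply (hnoLR u huQ).2 u₁ h1 u₂ h2
        have e1 : Q.lab u₁ = G.lab (f u₁ h1) := (hlab _ _ (hf2 u₁ h1)).2.2
        have e2 : Q.lab u₂ = G.lab (f u₂ h2) := (hlab _ _ (hf2 u₂ h2)).2.2
        rw [e1, e2, heq]
      · intro u' h
        simp only [dif_pos h]
        exact ⟨hf1 u' h, hf2 u' h⟩
  refine ⟨main, ⟨fun ⟨S, hS⟩ => ⟨S, main S hS⟩, fun ⟨S, hS⟩ => ⟨S, ?_⟩⟩⟩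
  obtain ⟨hlab, hV, hch, hpa⟩ := hS
  refine ⟨hlab, hV, ?_, ?_⟩
  · intro u v huv u' hu'
    obtain ⟨f, _, hf⟩ := hch u v huv
    exact ⟨f u', (hf u' hu').1, (hf u' hu').2⟩
  · intro u v huv u' hu'
    obtain ⟨g, _, hg⟩ := hpa u v huv
    exact ⟨g u', (hg u' hu').1, (hg u' hu').2⟩
end
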